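/- Let P and Q be two disjoint, nonempty, closed subsets of Euclidean space ℝ^d. Then for every integer k ≥ 2 there exists at least one distance k-sector of P and Q, i.e., a (k−1)-tuple (C_1, …, C_{k−1}) of nonempty subsets of ℝ^d such that C_i = bisect(C_{i−1}, C_{i+1}) for every i = 1, …, k−1, where C_0 = P and C_k = Q. -/

import Mathlib

open Metric Set

/-- The bisector of two sets: points equidistant from `X` and `Y`. -/
def bisect {d : ℕ} (X Y : Set (EuclideanSpace ℝ (Fin d))) : Set (EuclideanSpace ℝ (Fin d)) :=
  {z | infDist z X = infDist z Y}

/-!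
The sector is built from a pair of chains of closed "regions" `X₀ ⊆ X₁ ⊆ ⋯` and `Y₀ ⊇ Y₁ ⊇ ⋯`
with `X₀ = P`, `Y_k = Q` and, for `0 < i < k`, `Xᵢ` (resp. `Yᵢ`) the set of points at least as
close to `Xᵢ₋₁` as to `Yᵢ₊₁` (resp. the reverse). This system of equations is monotone in
`(X, Y)` for the order that is reversed on `Y`, so Knaster–Tarski provides a solution, and
`Cᵢ = Xᵢ ∩ Yᵢ` is the sector. Since `Xᵢ ∪ Yᵢ` is the whole space, every segment from `Xᵢ` to
`Yᵢ` crosses `Cᵢ`; hence from a point of `Xᵢ` the distance to `Cᵢ` is the distance to `Yᵢ`, and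
symmetrically, which turns the defining equations of `Xᵢ₊₁` and `Yᵢ₊₁` into the bisector
equation for `Cᵢ₊₁`.
-/

section Dominance

variable {α : Type*} [PseudoEMetricSpace α] {A A' B B' : Set α}

def dominance (A B : Set α) : Set α :=
  {z | infEDist z A ≤ infEDist z B}

theorem dominance_mono (hA : A ⊆ A') (hB : B' ⊆ B) : dominance A B ⊆ dominance A' B' :=
  fun _ hz => (infEDist_anti hA).trans (hz.trans (infEDist_anti hB))

theorem subset_dominance : A ⊆ dominance A B := fun z hz => by
  simp [dominance, infEDist_zero_of_mem hz]

theorem isClosed_dominance : IsClosed (dominance A B) :=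
  isClosed_le continuous_infEDist continuous_infEDist

theorem dominance_union_dominance : dominance A B ∪ dominance B A = univ :=
  eq_univ_of_forall fun z => le_total (infEDist z A) (infEDist z B)

theorem dominance_inter_subset (hA : IsClosed A) : dominance A B ∩ B ⊆ A := by
  rintro z ⟨hz, hzB⟩
  rw [mem_iff_infEDist_zero_of_closed hA]
  exact nonpos_iff_eq_zero.mp (infEDist_zero_of_mem hzB ▸ hz)

end Dominance

section Crossing

variable {E : Type*} [NormedAddCommGroup E] [NormedSpace ℝ E] {A B : Set E}

theorem exists_mem_segment_inter_of_union_eq_univ (hA : IsClosed A) (hB : IsClosed B)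
    (hAB : A ∪ B = univ) {x y : E} (hx : x ∈ A) (hy : y ∈ B) :
    ∃ e ∈ segment ℝ x y, e ∈ A ∩ B :=
  isPreconnected_closed_iff.mp (convex_segment x y).isPreconnected A B hA hB
    (by simp [hAB]) ⟨x, left_mem_segment ℝ x y, hx⟩ ⟨y, right_mem_segment ℝ x y, hy⟩

theorem infEDist_inter_eq_of_union_eq_univ (hA : IsClosed A) (hB : IsClosed B)
    (hAB : A ∪ B = univ) {z : E} (hz : z ∈ A) : infEDist z (A ∩ B) = infEDist z B := by
  refine le_antisymm (le_infEDist.mpr fun y hy => ?_) (infEDist_anti inter_subset_right)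
  obtain ⟨e, hze, he⟩ := exists_mem_segment_inter_of_union_eq_univ hA hB hAB hz hy
  calc infEDist z (A ∩ B) ≤ edist z e := infEDist_le_edist_of_mem he
    _ ≤ edist z y := by
      rw [edist_dist, edist_dist, ← dist_add_dist_of_mem_segment hze]
      exact ENNReal.ofReal_le_ofReal (le_add_of_nonneg_right dist_nonneg)

theorem mem_of_dist_le_infDist_inter (hA : IsClosed A) (hB : IsClosed B)
    (hAB : A ∪ B = univ) {z c : E} (hz : z ∈ A) (hc : c ∈ B)
    (hzc : dist z c ≤ infDist z (A ∩ B)) : c ∈ A := by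
  obtain ⟨e, hze, he⟩ := exists_mem_segment_inter_of_union_eq_univ hA hB hAB hz hc
  have hsum := dist_add_dist_of_mem_segment hze
  have hec : dist e c = 0 := by
    linarith [dist_nonneg (x := e) (y := c), infDist_le_dist_of_mem (x := z) he]
  exact dist_eq_zero.mp hec ▸ he.1

/-- If `z ∉ B`, the segment from `z` to a nearest point of `C` crosses `A ∩ B` strictly before
reaching `C`. -/
theorem mem_of_infDist_le_infDist_inter [ProperSpace E] (hA : IsClosed A) (hB : IsClosed B)
    (hAB : A ∪ B = univ) {C : Set E} (hC : IsClosed C) (hCne : C.Nonempty) (hCB : C ⊆ B)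
    (hAC : Disjoint A C) {z : E} (hz : infDist z C ≤ infDist z (A ∩ B)) : z ∈ B := by
  by_contra hzB
  have hzA : z ∈ A := (hAB ▸ mem_univ z : z ∈ A ∪ B).resolve_right hzB
  obtain ⟨c, hcC, hzc⟩ := hC.exists_infDist_eq_dist hCne z
  exact disjoint_left.mp hAC
    (mem_of_dist_le_infDist_inter hA hB hAB hzA (hCB hcC) (hzc ▸ hz)) hcC

end Crossing

section Chain

variable {α : Type*} [PseudoEMetricSpace α] {k : ℕ} {P Q : Set α} {X Y : ℕ → Set α}

/-- The conventions `Y₀ = univ` and `Xᵢ = univ`, `Yᵢ = Q` for `i ≥ k` make `X` monotone and `Y`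
antitone on all of `ℕ`. -/
structure IsDominanceChain (k : ℕ) (P Q : Set α) (X Y : ℕ → Set α) : Prop where
  left_zero : X 0 = P
  right_zero : Y 0 = univ
  left_of_le : ∀ i, k ≤ i → X i = univ
  right_of_le : ∀ i, k ≤ i → Y i = Q
  left_eq : ∀ i, 0 < i → i < k → X i = dominance (X (i - 1)) (Y (i + 1))
  right_eq : ∀ i, 0 < i → i < k → Y i = dominance (Y (i + 1)) (X (i - 1))

variable (k P Q) in
def dominanceChainMap : (ℕ → Set α) × (ℕ → Set α)ᵒᵈ →o (ℕ → Set α) × (ℕ → Set α)ᵒᵈ where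
  toFun XY :=
    (fun i => if i = 0 then P else if i < k then
        dominance (XY.1 (i - 1)) (OrderDual.ofDual XY.2 (i + 1)) else univ,
      OrderDual.toDual fun i => if i = 0 then univ else if i < k then
        dominance (OrderDual.ofDual XY.2 (i + 1)) (XY.1 (i - 1)) else Q)
  monotone' := by
    rintro ⟨X, Y⟩ ⟨X', Y'⟩ ⟨hX, hY⟩
    refine ⟨fun i => ?_, fun i => ?_⟩
    · dsimp only
      split_ifs
      exacts [le_rfl, dominance_mono (hX _) (hY _), le_rfl]
    · change (if i = 0 then _ else _ : Set α) ⊆ (if i = 0 then _ else _)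
      split_ifs
      exacts [le_rfl, dominance_mono (hY _) (hX _), le_rfl]

variable (P Q) in
theorem exists_isDominanceChain (hk : 0 < k) : ∃ X Y, IsDominanceChain k P Q X Y := by
  obtain ⟨F, hF⟩ : ∃ F, dominanceChainMap k P Q F = F :=
    ⟨_, OrderHom.map_lfp (dominanceChainMap k P Q)⟩
  set X := F.1
  set Y := OrderDual.ofDual F.2
  have hX : ∀ i, X i = if i = 0 then P else if i < k then
      dominance (X (i - 1)) (Y (i + 1)) else univ :=
    congrFun (congrArg Prod.fst hF.symm)
  have hY : ∀ i, Y i = if i = 0 then univ else if i < k then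
      dominance (Y (i + 1)) (X (i - 1)) else Q :=
    congrFun (congrArg (fun F => OrderDual.ofDual F.2) hF.symm)
  refine ⟨X, Y, ⟨?_, ?_, fun i hi => ?_, fun i hi => ?_,
    fun i hi hik => ?_, fun i hi hik => ?_⟩⟩
  · simpa using hX 0
  · simpa using hY 0
  · simpa [(hk.trans_le hi).ne', hi.not_gt] using hX i
  · simpa [(hk.trans_le hi).ne', hi.not_gt] using hY i
  · simpa [hi.ne', hik] using hX i
  · simpa [hi.ne', hik] using hY i

namespace IsDominanceChain

theorem isClosed_left (h : IsDominanceChain k P Q X Y) (hP : IsClosed P) (i : ℕ) :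
    IsClosed (X i) := by
  rcases Nat.eq_zero_or_pos i with rfl | hi
  · exact h.left_zero ▸ hP
  rcases lt_or_ge i k with hik | hik
  · exact h.left_eq i hi hik ▸ isClosed_dominance
  · exact h.left_of_le i hik ▸ isClosed_univ

theorem isClosed_right (h : IsDominanceChain k P Q X Y) (hQ : IsClosed Q) (i : ℕ) :
    IsClosed (Y i) := by
  rcases Nat.eq_zero_or_pos i with rfl | hi
  · exact h.right_zero ▸ isClosed_univ
  rcases lt_or_ge i k with hik | hik
  · exact h.right_eq i hi hik ▸ isClosed_dominance
  · exact h.right_of_le i hik ▸ hQ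

theorem monotone_left (h : IsDominanceChain k P Q X Y) : Monotone X := by
  refine monotone_nat_of_le_succ fun i => ?_
  rcases lt_or_ge (i + 1) k with hik | hik
  · exact h.left_eq (i + 1) i.succ_pos hik ▸ subset_dominance
  · exact h.left_of_le (i + 1) hik ▸ subset_univ _

theorem antitone_right (h : IsDominanceChain k P Q X Y) : Antitone Y := by
  refine antitone_nat_of_succ_le fun i => ?_
  rcases Nat.eq_zero_or_pos i with rfl | hi
  · exact h.right_zero ▸ subset_univ _
  rcases lt_or_ge i k with hik | hik
  · exact h.right_eq i hi hik ▸ subset_dominance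
  · rw [h.right_of_le i hik, h.right_of_le (i + 1) (by omega)]

theorem subset_left (h : IsDominanceChain k P Q X Y) (i : ℕ) : P ⊆ X i :=
  h.left_zero ▸ h.monotone_left i.zero_le

theorem subset_right (h : IsDominanceChain k P Q X Y) (i : ℕ) : Q ⊆ Y i := by
  rcases le_total i k with hik | hik
  · exact h.right_of_le k le_rfl ▸ h.antitone_right hik
  · exact (h.right_of_le i hik).ge

theorem left_union_right (h : IsDominanceChain k P Q X Y) (i : ℕ) : X i ∪ Y i = univ := by
  rcases Nat.eq_zero_or_pos i with rfl | hi
  · rw [h.right_zero, union_univ]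
  rcases lt_or_ge i k with hik | hik
  · rw [h.left_eq i hi hik, h.right_eq i hi hik, dominance_union_dominance]
  · rw [h.left_of_le i hik, univ_union]

theorem left_inter_right_succ_eq (h : IsDominanceChain k P Q X Y) (hP : IsClosed P)
    (hQ : IsClosed Q) {i : ℕ} (hi : i + 1 < k) :
    X (i + 1) ∩ Y (i + 2) = X i ∩ Y (i + 1) := by
  have hX := h.left_eq (i + 1) i.succ_pos hi
  have hY := h.right_eq (i + 1) i.succ_pos hi
  simp only [Nat.add_sub_cancel] at hX hY
  refine Subset.antisymm (fun z hz => ⟨?_, h.antitone_right (by omega) hz.2⟩)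
    (fun z hz => ⟨h.monotone_left (by omega) hz.1, ?_⟩)
  · exact dominance_inter_subset (h.isClosed_left hP i) ⟨hX ▸ hz.1, hz.2⟩
  · exact dominance_inter_subset (h.isClosed_right hQ (i + 2)) ⟨hY ▸ hz.2, hz.1⟩

theorem disjoint_left_right (h : IsDominanceChain k P Q X Y) (hP : IsClosed P)
    (hQ : IsClosed Q) (hPQ : Disjoint P Q) {a b : ℕ} (hab : a < b) (ha : a < k) :
    Disjoint (X a) (Y b) := by
  have hconst : ∀ i < k, X i ∩ Y (i + 1) = X 0 ∩ Y 1 := by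
    intro i hi
    induction i with
    | zero => rfl
    | succ i ih => rw [h.left_inter_right_succ_eq hP hQ hi, ih (by omega)]
  have hsubP : X a ∩ Y (a + 1) ⊆ P := by
    rw [hconst a ha, h.left_zero]
    exact inter_subset_left
  have hsubQ : X a ∩ Y (a + 1) ⊆ Q := by
    rw [hconst a ha, ← hconst (k - 1) (by omega), Nat.sub_add_cancel (by omega),
      h.right_of_le k le_rfl]
    exact inter_subset_right
  refine disjoint_left.mpr fun z hzX hzY => ?_
  have hz : z ∈ X a ∩ Y (a + 1) := ⟨hzX, h.antitone_right hab hzY⟩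
  exact disjoint_left.mp hPQ (hsubP hz) (hsubQ hz)

end IsDominanceChain

end Chain

namespace IsDominanceChain

variable {E : Type*} [NormedAddCommGroup E] [NormedSpace ℝ E] {k : ℕ} {P Q : Set E}
  {X Y : ℕ → Set E}

theorem infEDist_inter_of_mem_left (h : IsDominanceChain k P Q X Y) (hP : IsClosed P)
    (hQ : IsClosed Q) {i : ℕ} {z : E} (hz : z ∈ X i) :
    infEDist z (X i ∩ Y i) = infEDist z (Y i) :=
  infEDist_inter_eq_of_union_eq_univ (h.isClosed_left hP i) (h.isClosed_right hQ i)
    (h.left_union_right i) hz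

theorem infEDist_inter_of_mem_right (h : IsDominanceChain k P Q X Y) (hP : IsClosed P)
    (hQ : IsClosed Q) {i : ℕ} {z : E} (hz : z ∈ Y i) :
    infEDist z (X i ∩ Y i) = infEDist z (X i) := by
  rw [inter_comm]
  exact infEDist_inter_eq_of_union_eq_univ (h.isClosed_right hQ i) (h.isClosed_left hP i)
    (union_comm (X i) _ ▸ h.left_union_right i) hz

theorem inter_nonempty (h : IsDominanceChain k P Q X Y) (hP : IsClosed P) (hQ : IsClosed Q)
    (hPne : P.Nonempty) (hQne : Q.Nonempty) (i : ℕ) : (X i ∩ Y i).Nonempty := by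
  obtain ⟨p, hp⟩ := hPne
  obtain ⟨q, hq⟩ := hQne
  obtain ⟨e, -, he⟩ := exists_mem_segment_inter_of_union_eq_univ (h.isClosed_left hP i)
    (h.isClosed_right hQ i) (h.left_union_right i) (h.subset_left i hp) (h.subset_right i hq)
  exact ⟨e, he⟩

theorem mem_inter_succ_iff (h : IsDominanceChain k P Q X Y) (hP : IsClosed P)
    (hQ : IsClosed Q) {m : ℕ} (hm : m + 1 < k) {z : E} (hzY : z ∈ Y m) (hzX : z ∈ X (m + 2)) :
    z ∈ X (m + 1) ∩ Y (m + 1) ↔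
      infEDist z (X m ∩ Y m) = infEDist z (X (m + 2) ∩ Y (m + 2)) := by
  rw [h.left_eq (m + 1) m.succ_pos hm, h.right_eq (m + 1) m.succ_pos hm,
    h.infEDist_inter_of_mem_right hP hQ hzY, h.infEDist_inter_of_mem_left hP hQ hzX,
    Nat.add_sub_cancel, le_antisymm_iff]
  rfl

theorem inter_succ_eq (h : IsDominanceChain k P Q X Y) [ProperSpace E] (hP : IsClosed P)
    (hQ : IsClosed Q) (hPne : P.Nonempty) (hQne : Q.Nonempty) (hPQ : Disjoint P Q) {m : ℕ}
    (hm : m + 1 < k) :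
    X (m + 1) ∩ Y (m + 1) = {z | infDist z (X m ∩ Y m) = infDist z (X (m + 2) ∩ Y (m + 2))} := by
  have hC := fun i => h.inter_nonempty hP hQ hPne hQne i
  have hCcl := fun i => (h.isClosed_left hP i).inter (h.isClosed_right hQ i)
  ext z
  constructor
  · intro hz
    have hzY : z ∈ Y m := h.antitone_right m.le_succ hz.2
    have hzX : z ∈ X (m + 2) := h.monotone_left (m + 1).le_succ hz.1
    exact congrArg ENNReal.toReal ((h.mem_inter_succ_iff hP hQ hm hzY hzX).mp hz)
  · intro hz
    have hzY : z ∈ Y m := mem_of_infDist_le_infDist_inter (h.isClosed_left hP m)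
      (h.isClosed_right hQ m) (h.left_union_right m) (hCcl (m + 2)) (hC (m + 2))
      (inter_subset_right.trans (h.antitone_right (by omega)))
      ((h.disjoint_left_right hP hQ hPQ (by omega) (by omega)).mono_right inter_subset_right)
      hz.ge
    have hzX : z ∈ X (m + 2) := mem_of_infDist_le_infDist_inter (h.isClosed_right hQ (m + 2))
      (h.isClosed_left hP (m + 2)) (union_comm (X _) _ ▸ h.left_union_right (m + 2)) (hCcl m)
      (hC m) (inter_subset_left.trans (h.monotone_left (by omega)))
      ((h.disjoint_left_right hP hQ hPQ (by omega) (by omega)).symm.mono_right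
        inter_subset_left)
      (by rw [inter_comm (Y _)]; exact hz.le)
    refine (h.mem_inter_succ_iff hP hQ hm hzY hzX).mpr ?_
    exact (ENNReal.toReal_eq_toReal_iff' (infEDist_ne_top (hC m))
      (infEDist_ne_top (hC (m + 2)))).mp hz

end IsDominanceChain

/-- Existence of distance `k`-sectors in Euclidean space `ℝ^d`. -/
theorem ksector_exists_euclidean {d : ℕ} (k : ℕ) (hk : 2 ≤ k)
    (P Q : Set (EuclideanSpace ℝ (Fin d))) (hPne : P.Nonempty) (hQne : Q.Nonempty)
    (hPcl : IsClosed P) (hQcl : IsClosed Q) (hPQ : Disjoint P Q) :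
    ∃ C : ℕ → Set (EuclideanSpace ℝ (Fin d)), C 0 = P ∧ C k = Q ∧
      ∀ i, 0 < i → i < k →
        (C i).Nonempty ∧ C i = bisect (C (i - 1)) (C (i + 1)) := by
  obtain ⟨X, Y, h⟩ := exists_isDominanceChain P Q (by omega : 0 < k)
  refine ⟨fun i => X i ∩ Y i, by simp [h.left_zero, h.right_zero],
    by simp [h.left_of_le k le_rfl, h.right_of_le k le_rfl], fun i hi hik => ?_⟩
  obtain ⟨m, rfl⟩ := Nat.exists_eq_add_of_lt hi
  exact ⟨h.inter_nonempty hPcl hQcl hPne hQne _, h.inter_succ_eq hPcl hQcl hPne hQne hPQ hik⟩
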